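/- Let a > b > 0. For each n, let (Z_1^n, …, Z_n^n) be independent random variables with Z_i^n distributed as Geometric on ℕ_0 with success probability 1 − ρ_i^{(n)}, where ρ_i^{(n)} = Π_{j=i}^n (1 − a·n^{−3/2} + b·n^{−1/2}·1_{\{j=1\}}). Then the scaled vector (Z_1^n/√n, Z_2^n/√n, …), viewed as a random element of ℝ_+^∞ (padded with zeros), converges in distribution, in the product topology, to the product measure Exp(a−b) ⊗ Exp(a) ⊗ Exp(a) ⊗ ⋯. -/

import Mathlib

/-!
If `X ∼ Exp(θ)` and `c > 0`, then `⌊X / c⌋` is geometric on `ℕ₀` with `P(⌊X / c⌋ ≥ m) = e^{-θcm}`.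
With `θ_1 = a - b`, `θ_i = a` for `i ≥ 2` and `c_{n,i} = -log ρ_i^{(n)} / θ_i`, the scaled gaps
therefore have the same law as `(⌊X_i / c_{n,i}⌋ / √n)_i` for one fixed vector `X` of independent
`Exp(θ_i)` variables. A first-order expansion of `log ρ_i^{(n)}` gives `√n · c_{n,i} → 1`, so this
coupled vector converges to `X` pointwise, and dominated convergence finishes the proof.
-/

open Filter Finset MeasureTheory
open scoped ENNReal

open ProbabilityTheory Real
open scoped Topology

lemma ProbabilityTheory.expMeasure_Ici {r s : ℝ} (hr : 0 < r) (hs : 0 ≤ s) :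
    expMeasure r (Set.Ici s) = ENNReal.ofReal (exp (-(r * s))) := by
  have := isProbabilityMeasure_expMeasure hr
  have hatom : expMeasure r {s} = 0 :=
    withDensity_absolutelyContinuous _ _ Real.volume_singleton
  have hle : exp (-(r * s)) ≤ 1 := exp_le_one_iff.2 (by nlinarith)
  rw [← Set.compl_Iio, prob_compl_eq_one_sub measurableSet_Iio,
    measure_congr (Iio_ae_eq_Iic' hatom), ← ofReal_cdf, cdf_expMeasure_eq hr, if_pos hs,
    ← ENNReal.ofReal_one, ← ENNReal.ofReal_sub _ (sub_nonneg.2 hle), sub_sub_cancel]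

lemma ProbabilityTheory.ae_nonneg_expMeasure {r : ℝ} (hr : 0 < r) :
    ∀ᵐ x ∂expMeasure r, 0 ≤ x := by
  have := isProbabilityMeasure_expMeasure hr
  rw [ae_iff, show {x : ℝ | ¬0 ≤ x} = (Set.Ici 0)ᶜ by ext; simp,
    prob_compl_eq_zero_iff measurableSet_Ici, expMeasure_Ici hr le_rfl]
  simp

lemma ProbabilityTheory.expMeasure_map_natFloor_div_Ici {θ c : ℝ} (hθ : 0 < θ) (hc : 0 < c)
    (m : ℕ) :
    (expMeasure θ).map (fun x => ⌊x / c⌋₊) (Set.Ici m) = ENNReal.ofReal (exp (-(θ * c)) ^ m) := by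
  have := isProbabilityMeasure_expMeasure hθ
  have hmeas : Measurable fun x : ℝ => ⌊x / c⌋₊ :=
    Nat.measurable_floor.comp (measurable_div_const c)
  rw [Measure.map_apply hmeas measurableSet_Ici]
  rcases Nat.eq_zero_or_pos m with rfl | hm
  · simp
  have hpre : (fun x : ℝ => ⌊x / c⌋₊) ⁻¹' Set.Ici m = Set.Ici (m * c) := by
    ext x
    simp only [Set.mem_preimage, Set.mem_Ici, Nat.le_floor_iff' hm.ne', le_div_iff₀ hc]
  rw [hpre, expMeasure_Ici hθ (by positivity), ← exp_nat_mul]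
  ring_nf

lemma MeasureTheory.Measure.eq_pi_of_forall_pi_Ici {ι : Type*} [Fintype ι]
    {μ : ι → Measure ℕ} [∀ i, IsFiniteMeasure (μ i)] {ν : Measure (ι → ℕ)}
    (h : ∀ m : ι → ℕ, ν (Set.univ.pi fun i => Set.Ici (m i)) = ∏ i, μ i (Set.Ici (m i))) :
    ν = Measure.pi μ := by
  refine (Measure.pi_eq_generateFrom (C := fun _ => Set.range Set.Ici)
    (fun _ => (borel_eq_generateFrom_Ici ℕ).symm.trans BorelSpace.measurable_eq.symm)
    (fun _ => isPiSystem_Ici) (fun i => ?_) ?_).symm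
  · exact ⟨fun _ => Set.Ici 0, fun _ => ⟨0, rfl⟩, fun _ => measure_lt_top _ _,
      Set.iUnion_eq_univ_iff.2 fun x => ⟨0, Nat.zero_le x⟩⟩
  · intro s hs
    choose m hm using hs
    obtain rfl : s = fun i => Set.Ici (m i) := funext fun i => (hm i).symm
    exact h m

lemma identDistrib_natFloor_div_pi_expMeasure {ι Ω : Type*} [Fintype ι] [MeasurableSpace Ω]
    {μ : Measure Ω} {Y : Ω → ι → ℕ} (hY : Measurable Y) {θ c : ι → ℝ} (hθ : ∀ i, 0 < θ i)
    (hc : ∀ i, 0 < c i)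
    (htail : ∀ m : ι → ℕ,
      μ {ω | ∀ i, m i ≤ Y ω i} = ∏ i, ENNReal.ofReal (exp (-(θ i * c i)) ^ m i)) :
    IdentDistrib Y (fun x i => ⌊x i / c i⌋₊) μ (Measure.pi fun i => expMeasure (θ i)) := by
  have := fun i => isProbabilityMeasure_expMeasure (hθ i)
  have hfloor : ∀ i, Measurable fun x : ℝ => ⌊x / c i⌋₊ :=
    fun i => Nat.measurable_floor.comp (measurable_div_const _)
  refine ⟨hY.aemeasurable, (measurable_pi_lambda _ fun i =>
    (hfloor i).comp (measurable_pi_apply i)).aemeasurable, ?_⟩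
  rw [Measure.pi_map_pi fun i => (hfloor i).aemeasurable]
  refine Measure.eq_pi_of_forall_pi_Ici fun m => ?_
  rw [Measure.map_apply hY (MeasurableSet.univ_pi fun _ => measurableSet_Ici)]
  simp_rw [expMeasure_map_natFloor_div_Ici (hθ _) (hc _), ← htail]
  congr 1
  ext ω
  simp [Pi.le_def]

lemma measure_forall_fin_le_eq_prod {Ω : Type*} [MeasurableSpace Ω] {μ : Measure Ω}
    {Z : ℕ → Ω → ℕ} {ρ : ℕ → ℝ} {k n : ℕ} (hkn : k ≤ n)
    (htail : ∀ m : ℕ → ℕ,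
      μ {ω | ∀ i ∈ Icc 1 n, m i ≤ Z i ω} = ∏ i ∈ Icc 1 n, ENNReal.ofReal (ρ i ^ m i))
    (m : Fin k → ℕ) :
    μ {ω | ∀ i : Fin k, m i ≤ Z (i + 1) ω} = ∏ i : Fin k, ENNReal.ofReal (ρ (i + 1) ^ m i) := by
  set m' : ℕ → ℕ := fun j => if h : j - 1 < k then m ⟨j - 1, h⟩ else 0
  have hm' : ∀ i : Fin k, m' (i + 1) = m i := fun i => by simp [m']
  have hset : {ω | ∀ i : Fin k, m i ≤ Z (i + 1) ω} = {ω | ∀ j ∈ Icc 1 n, m' j ≤ Z j ω} := by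
    ext ω
    simp only [Set.mem_ofPred_eq, mem_Icc]
    refine ⟨fun h j hj => ?_, fun h i => hm' i ▸ h _ ⟨by omega, by have := i.isLt; omega⟩⟩
    by_cases hjk : j - 1 < k
    · obtain ⟨j, rfl⟩ : ∃ i, j = i + 1 := ⟨j - 1, by omega⟩
      exact hm' ⟨j, by omega⟩ ▸ h ⟨j, by omega⟩
    · simp [m', hjk]
  rw [hset, htail]
  symm
  refine prod_of_injOn (fun i : Fin k => (i : ℕ) + 1) (fun i _ j _ h => Fin.ext (by simpa using h))
    (fun i _ => mem_Icc.2 ⟨Nat.le_add_left _ _, i.isLt.trans_le hkn⟩) (fun j hj hj' => ?_)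
    (fun i _ => by rw [hm'])
  have hjk : ¬j - 1 < k := fun hjk =>
    hj' ⟨⟨j - 1, hjk⟩, mem_univ _, by have := (mem_Icc.1 hj).1; simp; omega⟩
  simp [m', hjk]

lemma tendsto_integral_comp_of_ae_tendsto {α E : Type*} [MeasurableSpace α] {P : Measure α}
    [IsFiniteMeasure P] [TopologicalSpace E] [MeasurableSpace E] [OpensMeasurableSpace E]
    {X : ℕ → α → E} {Y : α → E} (hX : ∀ n, AEMeasurable (X n) P)
    (hlim : ∀ᵐ x ∂P, Tendsto (fun n => X n x) atTop (𝓝 (Y x))) (f : BoundedContinuousFunction E ℝ) :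
    Tendsto (fun n => ∫ x, f (X n x) ∂P) atTop (𝓝 (∫ x, f (Y x) ∂P)) :=
  tendsto_integral_of_dominated_convergence (fun _ => ‖f‖)
    (fun n => (f.continuous.measurable.comp_aemeasurable (hX n)).aestronglyMeasurable)
    (integrable_const _) (fun _ => .of_forall fun _ => f.norm_coe_le_norm _)
    (hlim.mono fun _ hx => (f.continuous.tendsto _).comp hx)

lemma tendsto_natFloor_div_div {α : Type*} {l : Filter α} {s c : α → ℝ} {x : ℝ}
    (hs : Tendsto s l atTop) (hsc : Tendsto (fun n => s n * c n) l (𝓝 1)) (hx : 0 ≤ x) :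
    Tendsto (fun n => (⌊x / c n⌋₊ : ℝ) / s n) l (𝓝 x) := by
  have hc : ∀ᶠ n in l, 0 < c n := by
    filter_upwards [hs.eventually_gt_atTop 0, hsc.eventually (lt_mem_nhds one_pos)] with n h1 h2
    exact pos_of_mul_pos_right h2 h1.le
  have hupper : Tendsto (fun n => x / (s n * c n)) l (𝓝 x) := by
    have := (tendsto_const_nhds (x := x)).div hsc one_ne_zero
    rwa [div_one] at this
  have hlower : Tendsto (fun n => x / (s n * c n) - (s n)⁻¹) l (𝓝 x) := by
    simpa using hupper.sub hs.inv_tendsto_atTop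
  refine tendsto_of_tendsto_of_tendsto_of_le_of_le' hlower hupper ?_ ?_
  · filter_upwards [hs.eventually_gt_atTop 0, hc] with n hsn hcn
    calc x / (s n * c n) - (s n)⁻¹ = (x / c n - 1) / s n := by field_simp
      _ ≤ ⌊x / c n⌋₊ / s n := div_le_div_of_nonneg_right (Nat.sub_one_lt_floor _).le hsn.le
  · filter_upwards [hs.eventually_gt_atTop 0, hc] with n hsn hcn
    rw [mul_comm, ← div_div]
    exact div_le_div_of_nonneg_right (Nat.floor_le (div_nonneg hx hcn.le)) hsn.le

lemma tendsto_integral_natFloor_div_pi_expMeasure {ι : Type*} [Fintype ι] {θ : ι → ℝ}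
    (hθ : ∀ i, 0 < θ i) {s : ℕ → ℝ} {c : ℕ → ι → ℝ} (hs : Tendsto s atTop atTop)
    (hsc : ∀ i, Tendsto (fun n => s n * c n i) atTop (𝓝 1))
    (f : BoundedContinuousFunction (ι → ℝ) ℝ) :
    Tendsto
      (fun n => ∫ x, f (fun i => (⌊x i / c n i⌋₊ : ℝ) / s n) ∂Measure.pi fun i => expMeasure (θ i))
      atTop (𝓝 (∫ x, f x ∂Measure.pi fun i => expMeasure (θ i))) := by
  have := fun i => isProbabilityMeasure_expMeasure (hθ i)
  refine tendsto_integral_comp_of_ae_tendsto (Y := id) (fun n => ?_) ?_ f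
  · exact (measurable_pi_lambda _ fun i => (measurable_from_nat.comp
      (Nat.measurable_floor.comp ((measurable_pi_apply i).div_const _))).div_const _).aemeasurable
  · filter_upwards [ae_all_iff.2 fun i =>
      Measure.tendsto_eval_ae_ae.eventually (ae_nonneg_expMeasure (hθ i))] with x hx
    exact tendsto_pi_nhds.2 fun i => tendsto_natFloor_div_div hs (hsc i) (hx i)

lemma tendsto_mul_log_one_add_of_tendsto_mul {α : Type*} {l : Filter α} {s u : α → ℝ} {L : ℝ}
    (hs : ∀ᶠ x in l, 0 ≤ s x) (hu : Tendsto u l (𝓝 0))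
    (hsu : Tendsto (fun x => s x * u x) l (𝓝 L)) :
    Tendsto (fun x => s x * log (1 + u x)) l (𝓝 L) := by
  have hpos : ∀ᶠ x in l, 0 < 1 + u x := by
    have := hu.const_add 1
    rw [add_zero] at this
    exact this.eventually (lt_mem_nhds one_pos)
  have hlower : Tendsto (fun x => s x * u x / (1 + u x)) l (𝓝 L) := by
    have := hsu.div (hu.const_add 1) (by norm_num)
    rwa [add_zero, div_one] at this
  refine tendsto_of_tendsto_of_tendsto_of_le_of_le' hlower hsu ?_ ?_
  · filter_upwards [hs, hpos] with x hsx hx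
    rw [mul_div_assoc]
    refine mul_le_mul_of_nonneg_left ?_ hsx
    calc u x / (1 + u x) = 1 - (1 + u x)⁻¹ := by field_simp; ring
      _ ≤ log (1 + u x) := one_sub_inv_le_log_of_pos hx
  · filter_upwards [hs, hpos] with x hsx hx
    refine mul_le_mul_of_nonneg_left ?_ hsx
    linarith [log_le_sub_one_of_pos hx]

lemma natCast_rpow_three_halves (n : ℕ) : (n : ℝ) ^ ((3 : ℝ) / 2) = n * √n := by
  rw [show (3 : ℝ) / 2 = 1 + 1 / 2 by norm_num, rpow_add' (Nat.cast_nonneg n) (by norm_num),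
    rpow_one, sqrt_eq_rpow]

lemma tendsto_const_div_rpow_three_halves (a : ℝ) :
    Tendsto (fun n : ℕ => a / (n : ℝ) ^ ((3 : ℝ) / 2)) atTop (𝓝 0) :=
  tendsto_const_nhds.div_atTop
    ((tendsto_rpow_atTop (by norm_num)).comp tendsto_natCast_atTop_atTop)

lemma tendsto_const_div_sqrt (b : ℝ) : Tendsto (fun n : ℕ => b / √n) atTop (𝓝 0) :=
  tendsto_const_nhds.div_atTop (tendsto_sqrt_atTop.comp tendsto_natCast_atTop_atTop)

lemma tendsto_sqrt_mul_log_one_sub_pow (a : ℝ) (i : ℕ) :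
    Tendsto (fun n : ℕ => √n * log ((1 - a / (n : ℝ) ^ ((3 : ℝ) / 2)) ^ (n - i)))
      atTop (𝓝 (-a)) := by
  have hsu : Tendsto (fun n : ℕ => (√n * (n - i : ℕ)) * -(a / (n : ℝ) ^ ((3 : ℝ) / 2)))
      atTop (𝓝 (-a)) := by
    have := ((tendsto_const_div_atTop_nhds_zero_nat (i : ℝ)).const_sub 1).const_mul (-a)
    rw [sub_zero, mul_one] at this
    refine this.congr' ?_
    filter_upwards [eventually_ge_atTop (max i 1)] with n hn
    have hn0 : (0 : ℝ) < n := by exact_mod_cast (le_max_right i 1).trans hn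
    rw [natCast_rpow_three_halves, Nat.cast_sub ((le_max_left i 1).trans hn)]
    have : 0 < √(n : ℝ) := sqrt_pos.2 hn0
    field_simp
  have := tendsto_mul_log_one_add_of_tendsto_mul (.of_forall fun n => by positivity)
    (by simpa using (tendsto_const_div_rpow_three_halves a).neg) hsu
  refine this.congr fun n => ?_
  rw [log_pow, ← sub_eq_add_neg]
  ring

lemma tendsto_sqrt_mul_log_one_sub_add (a b : ℝ) :
    Tendsto (fun n : ℕ => √n * log (1 - a / (n : ℝ) ^ ((3 : ℝ) / 2) + b / √n))
      atTop (𝓝 b) := by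
  have hsu : Tendsto (fun n : ℕ => √n * (b / √n - a / (n : ℝ) ^ ((3 : ℝ) / 2))) atTop (𝓝 b) := by
    have := (tendsto_const_div_atTop_nhds_zero_nat a).const_sub b
    rw [sub_zero] at this
    refine this.congr' ?_
    filter_upwards [eventually_ge_atTop 1] with n hn
    have hn0 : (0 : ℝ) < n := by exact_mod_cast hn
    have : 0 < √(n : ℝ) := sqrt_pos.2 hn0
    rw [natCast_rpow_three_halves]
    field_simp
  have := tendsto_mul_log_one_add_of_tendsto_mul (.of_forall fun n => by positivity)
    (by simpa using (tendsto_const_div_sqrt b).sub (tendsto_const_div_rpow_three_halves a)) hsu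
  refine this.congr fun n => ?_
  congr 2
  ring

noncomputable def jacksonFactor (a b : ℝ) (n j : ℕ) : ℝ :=
  1 - a / (n : ℝ) ^ ((3 : ℝ) / 2) + if j = 1 then b / √n else 0

/-- `jacksonLoad a b n i` is the paper's `ρ_i^{(n)}`. -/
noncomputable def jacksonLoad (a b : ℝ) (n i : ℕ) : ℝ :=
  ∏ j ∈ Icc i n, jacksonFactor a b n j

lemma jacksonLoad_one (a b : ℝ) {n : ℕ} (hn : 1 ≤ n) :
    jacksonLoad a b n 1 =
      (1 - a / (n : ℝ) ^ ((3 : ℝ) / 2) + b / √n) * (1 - a / (n : ℝ) ^ ((3 : ℝ) / 2)) ^ (n - 1) := by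
  rw [jacksonLoad, ← mul_prod_Ioc_eq_prod_Icc hn]
  congr 1
  rw [← Nat.card_Ioc, ← prod_const]
  exact prod_congr rfl fun j hj => by simp [jacksonFactor, (mem_Ioc.1 hj).1.ne']

lemma jacksonLoad_of_one_lt (a b : ℝ) (n : ℕ) {i : ℕ} (hi : 1 < i) :
    jacksonLoad a b n i = (1 - a / (n : ℝ) ^ ((3 : ℝ) / 2)) ^ (n + 1 - i) := by
  rw [jacksonLoad, ← Nat.card_Icc, ← prod_const]
  exact prod_congr rfl fun j hj => by simp [jacksonFactor, (hi.trans_le (mem_Icc.1 hj).1).ne']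

lemma eventually_jacksonFactor_pos (a b : ℝ) :
    ∀ᶠ n : ℕ in atTop, 0 < 1 - a / (n : ℝ) ^ ((3 : ℝ) / 2) ∧
      0 < 1 - a / (n : ℝ) ^ ((3 : ℝ) / 2) + b / √n := by
  have h1 := (tendsto_const_div_rpow_three_halves a).const_sub 1
  have h2 := h1.add (tendsto_const_div_sqrt b)
  rw [sub_zero] at h1
  rw [sub_zero, add_zero] at h2
  exact (h1.eventually (lt_mem_nhds one_pos)).and (h2.eventually (lt_mem_nhds one_pos))

lemma eventually_jacksonLoad_pos (a b : ℝ) : ∀ᶠ n : ℕ in atTop, ∀ i, 0 < jacksonLoad a b n i := by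
  filter_upwards [eventually_jacksonFactor_pos a b] with n hn i
  refine prod_pos fun j _ => ?_
  unfold jacksonFactor
  split_ifs
  · exact hn.2
  · simpa using hn.1

lemma tendsto_sqrt_mul_neg_log_jacksonLoad (a b : ℝ) (i : ℕ) :
    Tendsto (fun n : ℕ => √n * -log (jacksonLoad a b n (i + 1))) atTop
      (𝓝 (if i = 0 then a - b else a)) := by
  rcases Nat.eq_zero_or_pos i with rfl | hi
  · have := ((tendsto_sqrt_mul_log_one_sub_add a b).add
      (tendsto_sqrt_mul_log_one_sub_pow a 1)).neg
    rw [show -(b + -a) = a - b by ring] at this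
    rw [if_pos rfl]
    refine this.congr' ?_
    filter_upwards [eventually_jacksonFactor_pos a b, eventually_ge_atTop 1] with n hn hn1
    rw [zero_add, jacksonLoad_one a b hn1, log_mul hn.2.ne' (pow_pos hn.1 _).ne']
    ring
  · have := (tendsto_sqrt_mul_log_one_sub_pow a i).neg
    rw [neg_neg] at this
    rw [if_neg hi.ne']
    refine this.congr fun n => ?_
    rw [jacksonLoad_of_one_lt a b n (by omega), Nat.add_sub_add_right, mul_neg]

theorem scaled_geometric_gaps_tendsto_product_exponential
    (a b : ℝ) (hb : 0 < b) (hab : b < a)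
    {Ω : Type*} [MeasurableSpace Ω] (μ : Measure Ω)
    (Z : ℕ → ℕ → Ω → ℕ)
    (hmeas : ∀ n i, Measurable (Z n i))
    -- the coordinates `Z n 1, …, Z n n` are independent geometric random
    -- variables on `ℕ₀` with success probabilities `1 − ρ_i^{(n)}`:
    (htail : ∀ n, 1 ≤ n → ∀ m : ℕ → ℕ,
      μ {ω | ∀ i ∈ Icc 1 n, m i ≤ Z n i ω}
        = ∏ i ∈ Icc 1 n, ENNReal.ofReal
            ((∏ j ∈ Icc i n,
              (1 - a / (n : ℝ) ^ ((3 : ℝ) / 2)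
                + if j = 1 then b / Real.sqrt n else 0)) ^ m i)) :
    ∀ k : ℕ, 1 ≤ k → ∀ f : BoundedContinuousFunction (Fin k → ℝ) ℝ,
      Tendsto
        (fun n : ℕ => ∫ ω, f (fun i => (Z n (i + 1) ω : ℝ) / Real.sqrt n) ∂μ)
        atTop
        (nhds (∫ x, f x ∂ (Measure.pi fun i : Fin k =>
          ProbabilityTheory.expMeasure (if (i : ℕ) = 0 then a - b else a)))) := by
  intro k hk f
  replace htail : ∀ n, 1 ≤ n → ∀ m : ℕ → ℕ, μ {ω | ∀ i ∈ Icc 1 n, m i ≤ Z n i ω}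
      = ∏ i ∈ Icc 1 n, ENNReal.ofReal (jacksonLoad a b n i ^ m i) := htail
  set θ : Fin k → ℝ := fun i => if (i : ℕ) = 0 then a - b else a
  have hθ : ∀ i, 0 < θ i := fun i => by dsimp only [θ]; split_ifs <;> linarith
  set c : ℕ → Fin k → ℝ := fun n i => -log (jacksonLoad a b n (i + 1)) / θ i
  have hc : ∀ i, Tendsto (fun n : ℕ => √n * c n i) atTop (𝓝 1) := fun i => by
    have := (tendsto_sqrt_mul_neg_log_jacksonLoad a b i).div_const (θ i)
    rw [show (if (i : ℕ) = 0 then a - b else a) / θ i = 1 from div_self (hθ i).ne'] at this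
    exact this.congr fun n => mul_div_assoc _ _ _
  have hcoupling : ∀ᶠ n in atTop, IdentDistrib (fun ω (i : Fin k) => Z n (i + 1) ω)
      (fun x i => ⌊x i / c n i⌋₊) μ (Measure.pi fun i => expMeasure (θ i)) := by
    filter_upwards [eventually_ge_atTop k, eventually_jacksonLoad_pos a b,
      eventually_all.2 fun i => (hc i).eventually (lt_mem_nhds one_pos)] with n hkn hρ hsc
    refine identDistrib_natFloor_div_pi_expMeasure (measurable_pi_lambda _ fun i => hmeas n _) hθ
      (fun i => pos_of_mul_pos_right (hsc i) (sqrt_nonneg _)) fun m => ?_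
    rw [measure_forall_fin_le_eq_prod hkn (htail n (hk.trans hkn)) m]
    refine prod_congr rfl fun i _ => ?_
    rw [mul_div_cancel₀ _ (hθ i).ne', neg_neg, exp_log (hρ _)]
  refine (tendsto_integral_natFloor_div_pi_expMeasure hθ
    (tendsto_sqrt_atTop.comp tendsto_natCast_atTop_atTop) hc f).congr' ?_
  filter_upwards [hcoupling] with n hn
  exact (hn.comp (u := fun z : Fin k → ℕ => f fun i => (z i : ℝ) / √n)
    (measurable_of_countable _)).integral_eq.symm
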